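/- For n ≥ 1, the Loewy length of the convolution algebra A_n is n; that is, the n-th power of the Jacobson radical of A_n is zero, while the (n−1)-st power of the Jacobson radical of A_n is nonzero. -/

import Mathlib

/-!
Grade `A_n` by the defect `#dom t - #im t` of a partial map. Composable maps have additive
defects, so the span `defectGE n k` of the basis elements of defect at least `k` is a left ideal
with `defectGE n j * defectGE n k ≤ defectGE n (j + k)`, and it vanishes once `k ≥ n ≥ 1`,
because a map with empty image has empty domain. Hence `defectGE n 1` consists of nilpotent
elements and lies in the radical. Conversely, radical elements are nilpotent (`A_n` is
artinian), so left multiplication by them has trace zero; for `u` injective on its domain, the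
trace of left multiplication by `a * e (pinv u)` is a positive multiple of the coefficient of `u`
in `a`. Thus the radical is `defectGE n 1`, its `n`-th power vanishes, and the map collapsing
`{0, …, n-1}` to `0` is an idempotent times `n - 1` maps of defect one, so the `(n-1)`-st power
does not.
-/


/-- The monoid of partial functions on `{1,…,n}`, modeled as `Fin n → Option (Fin n)`,
under composition of partial functions (right to left). -/
abbrev PT (n : ℕ) := Fin n → Option (Fin n)

namespace PT

variable {n : ℕ}

/-- Composition of partial functions, right to left: `comp s t = s ∘ t`. -/
def comp (s t : PT n) : PT n := fun x => (t x).bind s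

/-- The domain of a partial function. -/
def dom (t : PT n) : Finset (Fin n) := Finset.univ.filter fun x => (t x).isSome

/-- The image (range) of a partial function. -/
def ran (t : PT n) : Finset (Fin n) := Finset.univ.filter fun y => ∃ x, t x = some y

/-- The identity partial function on the subset `X`. -/
def idOn (X : Finset (Fin n)) : PT n := fun x => if x ∈ X then some x else none

instance : Monoid (PT n) where
  mul := comp
  one := fun x => some x
  mul_assoc s t w := by
    funext x
    show (w x).bind (fun z => (t z).bind s) = ((w x).bind t).bind s
    exact (Option.bind_assoc (w x) t s).symm
  one_mul t := by
    funext x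
    show (t x).bind (fun y => some y) = t x
    cases t x <;> rfl
  mul_one t := by
    funext x
    show (some x).bind t = t x
    rfl

end PT

namespace PT

variable {n : ℕ}

lemma mem_dom {t : PT n} {x : Fin n} : x ∈ dom t ↔ (t x).isSome := by simp [dom]

lemma mem_ran {t : PT n} {y : Fin n} : y ∈ ran t ↔ ∃ x, t x = some y := by simp [ran]

lemma comp_assoc (s t w : PT n) : comp (comp s t) w = comp s (comp t w) := mul_assoc s t w

lemma dom_comp {s t : PT n} (h : dom s = ran t) : dom (comp s t) = dom t := by
  ext x
  rw [mem_dom, mem_dom]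
  show ((t x).bind s).isSome ↔ _
  cases ht : t x with
  | none => simp
  | some a =>
    have ha : a ∈ dom s := by rw [h, mem_ran]; exact ⟨x, ht⟩
    rw [mem_dom] at ha
    simpa using ha
  

lemma ran_comp {t w : PT n} (h : dom t = ran w) : ran (comp t w) = ran t := by
  ext y
  rw [mem_ran, mem_ran]
  constructor
  · rintro ⟨x, hx⟩
    rcases Option.bind_eq_some_iff.mp hx with ⟨a, _, hta⟩
    exact ⟨a, hta⟩
  · rintro ⟨a, hta⟩
    have ha : a ∈ ran w := by
      rw [← h, mem_dom]
      simp [hta]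
    rcases mem_ran.mp ha with ⟨x, hx⟩
    exact ⟨x, by show (w x).bind t = some y; rw [hx]; exact hta⟩

lemma dom_idOn (X : Finset (Fin n)) : dom (idOn X) = X := by
  ext x
  rw [mem_dom, idOn]
  by_cases h : x ∈ X <;> simp [h]

lemma ran_idOn (X : Finset (Fin n)) : ran (idOn X) = X := by
  ext y
  rw [mem_ran]
  constructor
  · rintro ⟨x, hx⟩
    unfold idOn at hx
    split at hx
    · cases Option.some_injective _ hx; assumption
    · exact absurd hx (by simp)
  · intro hy
    exact ⟨y, by unfold idOn; rw [if_pos hy]⟩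

lemma comp_idOn {s : PT n} : comp s (idOn (dom s)) = s := by
  funext x
  show ((idOn (dom s)) x).bind s = s x
  unfold idOn
  by_cases h : x ∈ dom s
  · rw [if_pos h]; rfl
  · rw [if_neg h]
    rw [mem_dom] at h
    cases hs : s x with
    | none => rfl
    | some a => rw [hs] at h; simp at h

lemma idOn_comp {t : PT n} : comp (idOn (ran t)) t = t := by
  funext x
  show (t x).bind (idOn (ran t)) = t x
  cases ht : t x with
  | none => rfl
  | some a =>
    show idOn (ran t) a = some a
    unfold idOn
    rw [if_pos (mem_ran.mpr ⟨x, ht⟩)]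

end PT

/-- The convolution algebra `A_n` of the epimorphism category: the vector space with basis
`{e_t : t ∈ PT_n}` and multiplication `e_s · e_t = e_{s ∘ t}` if `dom s = im t`, else `0`. -/
noncomputable def PTAlg (n : ℕ) : Type := PT n →₀ ℂ

namespace PTAlg

variable {n : ℕ}

noncomputable instance : AddCommGroup (PTAlg n) := inferInstanceAs (AddCommGroup (PT n →₀ ℂ))
noncomputable instance : Module ℂ (PTAlg n) := inferInstanceAs (Module ℂ (PT n →₀ ℂ))

/-- The coefficient of `t` in an element of `A_n`. -/
noncomputable def coeff (a : PTAlg n) : PT n → ℂ := fun t => (show PT n →₀ ℂ from a) t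

/-- The basis element `e_t` of `A_n`. -/
noncomputable def e (t : PT n) : PTAlg n := show PT n →₀ ℂ from Finsupp.single t 1

/-- Convolution: `e_s · e_t = e_{s ∘ t}` if `dom s = im t`, and `0` otherwise. -/
noncomputable instance : Mul (PTAlg n) :=
  ⟨fun a b =>
    show PT n →₀ ℂ from
      Finsupp.equivFunOnFinite.symm fun u =>
        ∑ p : PT n × PT n,
          if PT.dom p.1 = PT.ran p.2 ∧ PT.comp p.1 p.2 = u then coeff a p.1 * coeff b p.2
          else 0⟩

/-- The multiplicative unit of `A_n` is `∑_{X ⊆ {1,…,n}} e_{id_X}`. -/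
noncomputable instance : One (PTAlg n) := ⟨∑ X : Finset (Fin n), e (PT.idOn X)⟩

end PTAlg

namespace PTAlg

variable {n : ℕ}

open PT

lemma ext' {a b : PTAlg n} (h : ∀ u, coeff a u = coeff b u) : a = b := Finsupp.ext h

lemma coeff_mul (a b : PTAlg n) (u : PT n) :
    coeff (a * b) u =
      ∑ p : PT n × PT n,
        if dom p.1 = ran p.2 ∧ comp p.1 p.2 = u then coeff a p.1 * coeff b p.2 else 0 :=
  congrFun (Finsupp.coe_equivFunOnFinite_symm _) _

lemma coeff_add (a b : PTAlg n) (u : PT n) : coeff (a + b) u = coeff a u + coeff b u := rfl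

lemma coeff_zero (u : PT n) : coeff (0 : PTAlg n) u = 0 := rfl

lemma coeff_smul (r : ℂ) (a : PTAlg n) (u : PT n) : coeff (r • a) u = r * coeff a u := rfl

lemma coeff_e (t u : PT n) : coeff (e t) u = if t = u then 1 else 0 := Finsupp.single_apply

lemma coeff_one (u : PT n) :
    coeff (1 : PTAlg n) u = if u = idOn (dom u) then 1 else 0 := by
  show coeff (∑ X : Finset (Fin n), e (idOn X)) u = _
  have : ∀ (l : Finset (Finset (Fin n))), coeff (∑ X ∈ l, e (idOn X)) u
      = ∑ X ∈ l, coeff (e (idOn X)) u := by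
    intro l
    induction l using Finset.induction_on with
    | empty => simp [coeff_zero]
    | insert s₁ l₁ hx ih => rw [Finset.sum_insert hx, Finset.sum_insert hx, coeff_add, ih]
  rw [this]
  by_cases h : u = idOn (dom u)
  · rw [if_pos h]
    rw [Finset.sum_eq_single (dom u)]
    · rw [coeff_e, if_pos h.symm]
    · intro X _ hX
      rw [coeff_e, if_neg]
      intro hc
      apply hX
      rw [← dom_idOn X, hc]
    · intro habs; exact absurd (Finset.mem_univ _) habs
  · rw [if_neg h]
    apply Finset.sum_eq_zero
    intro X _
    rw [coeff_e, if_neg]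
    intro hc
    apply h
    have : dom u = X := by rw [← hc, dom_idOn]
    rw [this, hc]

end PTAlg

namespace PTAlg

variable {n : ℕ}
open PT

lemma left_distrib' (a b c : PTAlg n) : a * (b + c) = a * b + a * c := by
  apply ext'; intro u
  rw [coeff_add, coeff_mul, coeff_mul, coeff_mul, ← Finset.sum_add_distrib]
  apply Finset.sum_congr rfl
  intro p _
  split_ifs with h
  · rw [coeff_add]; ring
  · rw [add_zero]

lemma right_distrib' (a b c : PTAlg n) : (a + b) * c = a * c + b * c := by
  apply ext'; intro u
  rw [coeff_add, coeff_mul, coeff_mul, coeff_mul, ← Finset.sum_add_distrib]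
  apply Finset.sum_congr rfl
  intro p _
  split_ifs with h
  · rw [coeff_add]; ring
  · rw [add_zero]

lemma zero_mul' (a : PTAlg n) : 0 * a = 0 := by
  apply ext'; intro u
  rw [coeff_mul, coeff_zero]
  apply Finset.sum_eq_zero
  intro p _
  split_ifs with h
  · rw [coeff_zero, zero_mul]
  · rfl

lemma mul_zero' (a : PTAlg n) : a * 0 = 0 := by
  apply ext'; intro u
  rw [coeff_mul, coeff_zero]
  apply Finset.sum_eq_zero
  intro p _
  split_ifs with h
  · rw [coeff_zero, mul_zero]
  · rfl

lemma mul_one' (a : PTAlg n) : a * 1 = a := by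
  apply ext'
  intro u
  rw [coeff_mul]
  rw [Finset.sum_eq_single ((u, idOn (dom u)) : PT n × PT n)]
  · rw [if_pos ⟨by rw [ran_idOn], comp_idOn⟩, coeff_one, if_pos (by rw [dom_idOn]), mul_one]
  · rintro ⟨s, t⟩ _ hne
    dsimp only at hne ⊢
    split_ifs with hcond
    · obtain ⟨h1, h2⟩ := hcond
      rw [coeff_one]
      split_ifs with ht
      · exfalso
        apply hne
        rw [ht, ran_idOn] at h1
        rw [ht, ← h1, comp_idOn] at h2
        subst h2
        rw [Prod.mk.injEq]
        refine ⟨rfl, ?_⟩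
        rw [ht, h1]
      · rw [mul_zero]
    · rfl
  · intro habs; exact absurd (Finset.mem_univ _) habs

lemma one_mul' (a : PTAlg n) : 1 * a = a := by
  apply ext'
  intro u
  rw [coeff_mul]
  rw [Finset.sum_eq_single ((idOn (ran u), u) : PT n × PT n)]
  · rw [if_pos ⟨by rw [dom_idOn], idOn_comp⟩, coeff_one, if_pos (by rw [dom_idOn]), one_mul]
  · rintro ⟨s, t⟩ _ hne
    dsimp only at hne ⊢
    split_ifs with hcond
    · obtain ⟨h1, h2⟩ := hcond
      rw [coeff_one]
      split_ifs with hs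
      · exfalso
        apply hne
        rw [hs, h1, idOn_comp] at h2
        subst h2
        rw [Prod.mk.injEq]
        refine ⟨?_, rfl⟩
        rw [hs, h1]
      · rw [zero_mul]
    · rfl
  · intro habs; exact absurd (Finset.mem_univ _) habs

end PTAlg

namespace PTAlg

variable {n : ℕ}
open PT

lemma key_left (a b c : PTAlg n) (u w : PT n) :
    (∑ q1 : PT n, if dom q1 = ran w ∧ comp q1 w = u then coeff (a * b) q1 * coeff c w else 0)
      = ∑ s : PT n, ∑ t : PT n,
          if dom s = ran t ∧ dom t = ran w ∧ comp (comp s t) w = u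
          then coeff a s * coeff b t * coeff c w else 0 := by
  have step : ∀ q1 : PT n,
      (if dom q1 = ran w ∧ comp q1 w = u then coeff (a * b) q1 * coeff c w else 0)
        = ∑ s : PT n, ∑ t : PT n,
            if (dom s = ran t ∧ comp s t = q1) ∧ (dom q1 = ran w ∧ comp q1 w = u)
            then coeff a s * coeff b t * coeff c w else 0 := by
    intro q1
    by_cases h : dom q1 = ran w ∧ comp q1 w = u
    · rw [if_pos h, coeff_mul, Fintype.sum_prod_type, Finset.sum_mul]
      apply Finset.sum_congr rfl
      intro s _
      rw [Finset.sum_mul]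
      apply Finset.sum_congr rfl
      intro t _
      rw [ite_mul, zero_mul]
      by_cases h2 : dom s = ran t ∧ comp s t = q1
      · rw [if_pos h2, if_pos ⟨h2, h⟩]
      · rw [if_neg h2, if_neg (fun hc => h2 hc.1)]
    · rw [if_neg h]
      symm
      apply Finset.sum_eq_zero; intro s _
      apply Finset.sum_eq_zero; intro t _
      exact if_neg (fun hc => h hc.2)
  rw [Finset.sum_congr rfl (fun q1 _ => step q1), Finset.sum_comm]
  apply Finset.sum_congr rfl
  intro s _
  rw [Finset.sum_comm]
  apply Finset.sum_congr rfl
  intro t _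
  rw [Finset.sum_eq_single (comp s t)]
  · apply if_congr _ rfl rfl
    constructor
    · rintro ⟨⟨h1, -⟩, h2, h3⟩
      exact ⟨h1, by rw [← dom_comp h1]; exact h2, h3⟩
    · rintro ⟨h1, h2, h3⟩
      exact ⟨⟨h1, rfl⟩, by rw [dom_comp h1]; exact h2, h3⟩
  · intro q1 _ hne
    apply if_neg
    rintro ⟨⟨-, hq⟩, -⟩
    exact hne hq.symm
  · intro habs; exact absurd (Finset.mem_univ _) habs

lemma key_right (a b c : PTAlg n) (u s : PT n) :
    (∑ q2 : PT n, if dom s = ran q2 ∧ comp s q2 = u then coeff a s * coeff (b * c) q2 else 0)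
      = ∑ t : PT n, ∑ w : PT n,
          if dom s = ran t ∧ dom t = ran w ∧ comp (comp s t) w = u
          then coeff a s * coeff b t * coeff c w else 0 := by
  have step : ∀ q2 : PT n,
      (if dom s = ran q2 ∧ comp s q2 = u then coeff a s * coeff (b * c) q2 else 0)
        = ∑ t : PT n, ∑ w : PT n,
            if (dom t = ran w ∧ comp t w = q2) ∧ (dom s = ran q2 ∧ comp s q2 = u)
            then coeff a s * coeff b t * coeff c w else 0 := by
    intro q2
    by_cases h : dom s = ran q2 ∧ comp s q2 = u
    · rw [if_pos h, coeff_mul, Fintype.sum_prod_type, Finset.mul_sum]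
      apply Finset.sum_congr rfl
      intro t _
      rw [Finset.mul_sum]
      apply Finset.sum_congr rfl
      intro w _
      rw [mul_ite, mul_zero]
      by_cases h2 : dom t = ran w ∧ comp t w = q2
      · rw [if_pos h2, if_pos ⟨h2, h⟩, mul_assoc]
      · rw [if_neg h2, if_neg (fun hc => h2 hc.1)]
    · rw [if_neg h]
      symm
      apply Finset.sum_eq_zero; intro t _
      apply Finset.sum_eq_zero; intro w _
      exact if_neg (fun hc => h hc.2)
  rw [Finset.sum_congr rfl (fun q2 _ => step q2), Finset.sum_comm]
  apply Finset.sum_congr rfl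
  intro t _
  rw [Finset.sum_comm]
  apply Finset.sum_congr rfl
  intro w _
  rw [Finset.sum_eq_single (comp t w)]
  · apply if_congr _ rfl rfl
    constructor
    · rintro ⟨⟨h1, -⟩, h2, h3⟩
      refine ⟨by rw [← ran_comp h1]; exact h2, h1, ?_⟩
      rw [comp_assoc]; exact h3
    · rintro ⟨h1, h2, h3⟩
      exact ⟨⟨h2, rfl⟩, by rw [ran_comp h2]; exact h1, by rw [← comp_assoc]; exact h3⟩
  · intro q2 _ hne
    apply if_neg
    rintro ⟨⟨-, hq⟩, -⟩
    exact hne hq.symm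
  · intro habs; exact absurd (Finset.mem_univ _) habs

lemma coeff_mul_mul (a b c : PTAlg n) (u : PT n) :
    coeff (a * b * c) u =
      ∑ s : PT n, ∑ t : PT n, ∑ w : PT n,
        if dom s = ran t ∧ dom t = ran w ∧ comp (comp s t) w = u
        then coeff a s * coeff b t * coeff c w else 0 := by
  rw [coeff_mul, Fintype.sum_prod_type, Finset.sum_comm]
  calc (∑ w : PT n, ∑ q1 : PT n,
          if dom q1 = ran w ∧ comp q1 w = u then coeff (a * b) q1 * coeff c w else 0)
      = ∑ w : PT n, ∑ s : PT n, ∑ t : PT n,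
          if dom s = ran t ∧ dom t = ran w ∧ comp (comp s t) w = u
          then coeff a s * coeff b t * coeff c w else 0 :=
        Finset.sum_congr rfl fun w _ => key_left a b c u w
    _ = ∑ s : PT n, ∑ w : PT n, ∑ t : PT n,
          if dom s = ran t ∧ dom t = ran w ∧ comp (comp s t) w = u
          then coeff a s * coeff b t * coeff c w else 0 := Finset.sum_comm
    _ = ∑ s : PT n, ∑ t : PT n, ∑ w : PT n,
          if dom s = ran t ∧ dom t = ran w ∧ comp (comp s t) w = u
          then coeff a s * coeff b t * coeff c w else 0 :=
        Finset.sum_congr rfl fun s _ => Finset.sum_comm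

lemma coeff_mul_mul' (a b c : PTAlg n) (u : PT n) :
    coeff (a * (b * c)) u =
      ∑ s : PT n, ∑ t : PT n, ∑ w : PT n,
        if dom s = ran t ∧ dom t = ran w ∧ comp (comp s t) w = u
        then coeff a s * coeff b t * coeff c w else 0 := by
  rw [coeff_mul, Fintype.sum_prod_type]
  exact Finset.sum_congr rfl fun s _ => key_right a b c u s

lemma mul_assoc' (a b c : PTAlg n) : a * b * c = a * (b * c) :=
  ext' fun u => (coeff_mul_mul a b c u).trans (coeff_mul_mul' a b c u).symm

noncomputable instance : Ring (PTAlg n) :=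
  { (inferInstance : AddCommGroup (PTAlg n)) with
    mul := (· * ·)
    one := 1
    mul_assoc := mul_assoc'
    one_mul := one_mul'
    mul_one := mul_one'
    left_distrib := left_distrib'
    right_distrib := right_distrib'
    zero_mul := zero_mul'
    mul_zero := mul_zero' }

noncomputable instance : Algebra ℂ (PTAlg n) :=
  Algebra.ofModule
    (fun r x y => by
      apply ext'; intro u
      rw [coeff_smul, coeff_mul, coeff_mul, Finset.mul_sum]
      apply Finset.sum_congr rfl
      intro p _
      split_ifs with h
      · rw [coeff_smul]; ring
      · rw [mul_zero])
    (fun r x y => by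
      apply ext'; intro u
      rw [coeff_smul, coeff_mul, coeff_mul, Finset.mul_sum]
      apply Finset.sum_congr rfl
      intro p _
      split_ifs with h
      · rw [coeff_smul]; ring
      · rw [mul_zero])

end PTAlg

lemma IsArtinianRing.isNilpotent_of_mem_jacobson {R : Type*} [Ring R] [IsArtinianRing R] {x : R}
    (hx : x ∈ Ideal.jacobson (⊥ : Ideal R)) : IsNilpotent x := by
  obtain ⟨k, hk⟩ := IsArtinianRing.isNilpotent_jacobson_bot (R := R)
  exact ⟨k, by simpa [hk] using Ideal.pow_mem_pow hx k⟩

lemma LinearMap.trace_mulLeft_eq_zero_of_mem_jacobson {K A : Type*} [Field K] [Ring A]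
    [Algebra K A] [FiniteDimensional K A] {b : A} (hb : b ∈ Ideal.jacobson (⊥ : Ideal A)) :
    LinearMap.trace K A (LinearMap.mulLeft K b) = 0 := by
  have : IsArtinianRing A := .of_finite K A
  obtain ⟨k, hk⟩ := IsArtinianRing.isNilpotent_of_mem_jacobson hb
  exact (LinearMap.isNilpotent_trace_of_isNilpotent
    ⟨k, by rw [LinearMap.pow_mulLeft, hk, LinearMap.mulLeft_zero_eq_zero]⟩).eq_zero

namespace PT

variable {n : ℕ}

open Finset

lemma eq_none_of_notMem_dom {t : PT n} {x : Fin n} (hx : x ∉ dom t) : t x = none :=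
  Option.not_isSome_iff_eq_none.mp (mt mem_dom.mpr hx)

lemma map_some_ran (u : PT n) : (ran u).map Function.Embedding.some = (dom u).image u := by
  ext (_ | y)
  · simpa using fun x hx => Option.isSome_iff_ne_none.mp (mem_dom.mp hx)
  · simp only [mem_map, Function.Embedding.some_apply, Option.some.injEq, exists_eq_right,
      mem_ran, mem_image]
    exact ⟨fun ⟨x, hx⟩ => ⟨x, mem_dom.mpr (by simp [hx]), hx⟩, fun ⟨x, _, hx⟩ => ⟨x, hx⟩⟩

lemma card_ran_eq_card_image_dom (u : PT n) : #(ran u) = #((dom u).image u) := by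
  rw [← map_some_ran, card_map]

lemma card_ran_le_card_dom (u : PT n) : #(ran u) ≤ #(dom u) :=
  card_ran_eq_card_image_dom u ▸ card_image_le

lemma dom_eq_empty_of_ran_eq_empty {u : PT n} (h : ran u = ∅) : dom u = ∅ := by
  rw [← card_eq_zero, card_ran_eq_card_image_dom, card_eq_zero, image_eq_empty] at h
  exact h

lemma injOn_dom_of_card_dom_le {u : PT n} (h : #(dom u) ≤ #(ran u)) : Set.InjOn u (dom u) :=
  card_image_iff.mp <| by
    rw [← card_ran_eq_card_image_dom]; exact le_antisymm (card_ran_le_card_dom u) h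

lemma composable_and_comp_eq_self_iff {s t : PT n} :
    dom s = ran t ∧ comp s t = t ↔ s = idOn (ran t) := by
  refine ⟨fun ⟨hdom, hcomp⟩ => funext fun y => ?_, fun h => h ▸ ⟨dom_idOn _, idOn_comp⟩⟩
  by_cases hy : y ∈ ran t
  · obtain ⟨x, hx⟩ := mem_ran.mp hy
    have := congrFun hcomp x
    simp only [comp, hx, Option.bind_some] at this
    rw [this, idOn, if_pos hy]
  · rw [idOn, if_neg hy, eq_none_of_notMem_dom (t := s) (by rwa [hdom])]

noncomputable def pinv (u : PT n) : PT n :=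
  fun y => if h : ∃ x, u x = some y then some h.choose else none

lemma dom_pinv (u : PT n) : dom (pinv u) = ran u := by
  ext y
  by_cases h : ∃ x, u x = some y <;> simp [mem_dom, mem_ran, pinv, h]

lemma comp_pinv (u : PT n) : comp u (pinv u) = idOn (ran u) := by
  funext y
  by_cases h : ∃ x, u x = some y
  · simp [comp, pinv, h, h.choose_spec, idOn, mem_ran]
  · simp [comp, pinv, h, idOn, mem_ran]

lemma pinv_eq_some {u : PT n} (hu : Set.InjOn u (dom u)) {x y : Fin n}
    (h : u x = some y) : pinv u y = some x := by
  have hy : ∃ x, u x = some y := ⟨x, h⟩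
  have hmem : ∀ {z}, u z = some y → z ∈ (dom u : Set (Fin n)) := fun hz => by
    simp [mem_dom, hz]
  rw [pinv, dif_pos hy, hu (hmem hy.choose_spec) (hmem h) (hy.choose_spec.trans h.symm)]

lemma ran_pinv {u : PT n} (hu : Set.InjOn u (dom u)) : ran (pinv u) = dom u := by
  ext x
  constructor
  · intro hx
    obtain ⟨y, hy⟩ := mem_ran.mp hx
    rw [pinv] at hy
    split_ifs at hy with h
    cases Option.some_injective _ hy
    simp [mem_dom, h.choose_spec]
  · intro hx
    obtain ⟨y, hy⟩ := Option.isSome_iff_exists.mp (mem_dom.mp hx)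
    exact mem_ran.mpr ⟨y, pinv_eq_some hu hy⟩

lemma composable_pinv_and_comp_eq_idOn_iff {u : PT n} (hu : Set.InjOn u (dom u)) {s : PT n}
    {X : Finset (Fin n)} :
    dom s = ran (pinv u) ∧ comp s (pinv u) = idOn X ↔ s = u ∧ X = ran u := by
  refine ⟨fun ⟨hdom, hcomp⟩ => ?_, fun ⟨hs, hX⟩ => by
    rw [hs, hX]; exact ⟨(ran_pinv hu).symm, comp_pinv u⟩⟩
  rw [ran_pinv hu] at hdom
  have hX : X = ran u := by
    rw [← dom_idOn X, ← hcomp, dom_comp (hdom.trans (ran_pinv hu).symm), dom_pinv]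
  refine ⟨funext fun x => ?_, hX⟩
  by_cases hx : x ∈ dom u
  · obtain ⟨y, hy⟩ := Option.isSome_iff_exists.mp (mem_dom.mp hx)
    have := congrFun hcomp y
    rw [comp, pinv_eq_some hu hy, Option.bind_some, idOn,
      if_pos (hX ▸ mem_ran.mpr ⟨x, hy⟩)] at this
    rw [this, hy]
  · rw [eq_none_of_notMem_dom hx, eq_none_of_notMem_dom (t := s) (by rwa [hdom])]

end PT

namespace PTAlg

variable {n : ℕ}

open PT Finset

lemma e_ne_zero (t : PT n) : e t ≠ 0 := fun h => by
  simpa [coeff_e, coeff_zero] using congrArg (coeff · t) h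

instance : Nontrivial (PTAlg n) := ⟨⟨e (idOn ∅), 0, e_ne_zero _⟩⟩

lemma coeff_mul_e (a : PTAlg n) (w v : PT n) :
    coeff (a * e w) v = ∑ s with dom s = ran w ∧ comp s w = v, coeff a s := by
  rw [coeff_mul, Fintype.sum_prod_type, sum_filter]
  refine sum_congr rfl fun s _ => ?_
  rw [sum_eq_single w (fun t _ ht => by simp [coeff_e, Ne.symm ht]) (by simp)]
  simp [coeff_e]

lemma e_mul_e {s t : PT n} (h : dom s = ran t) : e s * e t = e (comp s t) :=
  ext' fun v => by simp [coeff_mul_e, coeff_e, h]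

lemma coeff_mul_e_self (b : PTAlg n) (t : PT n) :
    coeff (b * e t) t = coeff b (idOn (ran t)) := by
  simp [coeff_mul_e, composable_and_comp_eq_self_iff, filter_eq']

lemma coeff_mul_e_pinv_idOn (a : PTAlg n) {u : PT n} (hu : Set.InjOn u (dom u))
    (X : Finset (Fin n)) :
    coeff (a * e (pinv u)) (idOn X) = if X = ran u then coeff a u else 0 := by
  rw [coeff_mul_e, sum_filter]
  simp [composable_pinv_and_comp_eq_idOn_iff hu, ite_and]

def defectGE (n k : ℕ) : Submodule ℂ (PTAlg n) where
  carrier := {a | ∀ u, coeff a u ≠ 0 → #(ran u) + k ≤ #(dom u)}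
  add_mem' {a b} ha hb u hu := by
    rw [coeff_add] at hu
    by_cases hau : coeff a u = 0
    · exact hb u (by rwa [hau, zero_add] at hu)
    · exact ha u hau
  zero_mem' u hu := absurd (coeff_zero u) hu
  smul_mem' c a ha u hu := ha u (right_ne_zero_of_mul (coeff_smul c a u ▸ hu))

lemma mem_defectGE {k : ℕ} {a : PTAlg n} :
    a ∈ defectGE n k ↔ ∀ u, coeff a u ≠ 0 → #(ran u) + k ≤ #(dom u) := Iff.rfl

lemma e_mem_defectGE_iff {k : ℕ} {t : PT n} : e t ∈ defectGE n k ↔ #(ran t) + k ≤ #(dom t) := by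
  simp [mem_defectGE, coeff_e]

lemma defectGE_zero : defectGE n 0 = ⊤ :=
  eq_top_iff.mpr fun _ _ u _ => by simpa using card_ran_le_card_dom u

lemma exists_of_coeff_mul_ne_zero {a b : PTAlg n} {u : PT n} (h : coeff (a * b) u ≠ 0) :
    ∃ s t, dom s = ran t ∧ comp s t = u ∧ coeff a s ≠ 0 ∧ coeff b t ≠ 0 := by
  rw [coeff_mul] at h
  obtain ⟨⟨s, t⟩, -, hst⟩ := exists_ne_zero_of_sum_ne_zero h
  split_ifs at hst with hcomp
  · exact ⟨s, t, hcomp.1, hcomp.2, left_ne_zero_of_mul hst, right_ne_zero_of_mul hst⟩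
  · exact absurd rfl hst

lemma mul_mem_defectGE {j k : ℕ} {a b : PTAlg n} (ha : a ∈ defectGE n j)
    (hb : b ∈ defectGE n k) : a * b ∈ defectGE n (j + k) := by
  intro u hu
  obtain ⟨s, t, hst, rfl, has, hbt⟩ := exists_of_coeff_mul_ne_zero hu
  have hs := ha s has
  have ht := hb t hbt
  rw [ran_comp hst, dom_comp hst]
  rw [hst] at hs
  omega

lemma mul_mem_defectGE_left {k : ℕ} (a : PTAlg n) {b : PTAlg n} (hb : b ∈ defectGE n k) :
    a * b ∈ defectGE n k := by
  simpa using mul_mem_defectGE (defectGE_zero ▸ Submodule.mem_top : a ∈ defectGE n 0) hb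

lemma defectGE_one_pow_le (k : ℕ) : defectGE n 1 ^ k ≤ defectGE n k := by
  induction k with
  | zero => simp [defectGE_zero]
  | succ k ih =>
    rw [pow_succ]
    exact Submodule.mul_le.mpr fun a ha b hb => mul_mem_defectGE (ih ha) hb

lemma defectGE_eq_bot {k : ℕ} (hk : 0 < k) (hnk : n ≤ k) : defectGE n k = ⊥ := by
  refine eq_bot_iff.mpr fun a ha => (Submodule.mem_bot ℂ).mpr (ext' fun u => ?_)
  by_contra hu
  have hdef := ha u hu
  have hdom : #(dom u) ≤ n := card_le_univ _ |>.trans_eq (Fintype.card_fin n)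
  have hran : ran u = ∅ := card_eq_zero.mp (by omega)
  rw [dom_eq_empty_of_ran_eq_empty hran, card_empty] at hdef
  omega

lemma isNilpotent_of_mem_defectGE_one {a : PTAlg n} (ha : a ∈ defectGE n 1) : IsNilpotent a := by
  refine ⟨n + 1, ?_⟩
  have := defectGE_one_pow_le (n + 1) (Submodule.pow_mem_pow _ ha (n + 1))
  rwa [defectGE_eq_bot n.succ_pos n.le_succ, Submodule.mem_bot] at this

lemma defectGE_one_le_jacobson :
    defectGE n 1 ≤ (Ideal.jacobson (⊥ : Ideal (PTAlg n))).restrictScalars ℂ := by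
  intro a ha
  refine Ideal.mem_jacobson_iff.mpr fun y => ?_
  obtain ⟨c, hc⟩ := (isNilpotent_of_mem_defectGE_one (mul_mem_defectGE_left y ha)).isUnit_one_add
  refine ⟨↑c⁻¹, (Submodule.mem_bot _).mpr ?_⟩
  rw [mul_assoc, sub_eq_zero, ← mul_add_one, add_comm, ← hc, Units.inv_mul]

noncomputable instance : Module.Finite ℂ (PTAlg n) :=
  inferInstanceAs (Module.Finite ℂ (PT n →₀ ℂ))

noncomputable def basisE : Module.Basis (PT n) ℂ (PTAlg n) := Finsupp.basisSingleOne

lemma trace_mulLeft (b : PTAlg n) :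
    LinearMap.trace ℂ (PTAlg n) (LinearMap.mulLeft ℂ b) = ∑ t, coeff b (idOn (ran t)) := by
  classical
  rw [LinearMap.trace_eq_matrix_trace ℂ basisE, Matrix.trace]
  refine sum_congr rfl fun t _ => ?_
  rw [Matrix.diag_apply, LinearMap.toMatrix_apply, LinearMap.mulLeft_apply,
    show basisE t = e t from congrFun Finsupp.coe_basisSingleOne t]
  exact coeff_mul_e_self b t

/-- Multiplying by `e (pinv u)` moves the coefficient of `u` onto an idempotent, where the
trace of left multiplication sees it. -/
lemma coeff_eq_zero_of_mem_jacobson {a : PTAlg n} (ha : a ∈ Ideal.jacobson (⊥ : Ideal (PTAlg n)))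
    {u : PT n} (hu : Set.InjOn u (dom u)) : coeff a u = 0 := by
  have htr := LinearMap.trace_mulLeft_eq_zero_of_mem_jacobson (K := ℂ)
    (Ideal.mul_mem_right (e (pinv u)) _ ha)
  simp_rw [trace_mulLeft, coeff_mul_e_pinv_idOn a hu, ← sum_filter, sum_const,
    nsmul_eq_mul] at htr
  refine (mul_eq_zero.mp htr).resolve_left ?_
  have hu_mem : u ∈ ({t | ran t = ran u} : Finset (PT n)) := by simp
  exact_mod_cast (card_pos.mpr ⟨u, hu_mem⟩).ne'

lemma jacobson_le_defectGE_one :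
    (Ideal.jacobson (⊥ : Ideal (PTAlg n))).restrictScalars ℂ ≤ defectGE n 1 := fun a ha u hu => by
  by_contra hlt
  exact hu (coeff_eq_zero_of_mem_jacobson ha (injOn_dom_of_card_dom_le (by omega)))

lemma restrictScalars_jacobson_eq_defectGE_one :
    (Ideal.jacobson (⊥ : Ideal (PTAlg n))).restrictScalars ℂ = defectGE n 1 :=
  le_antisymm jacobson_le_defectGE_one defectGE_one_le_jacobson

def collapse (n k : ℕ) : PT n := fun x => if x.val < k then some ⟨0, x.pos⟩ else none

def squash (n k : ℕ) : PT n := fun x =>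
  if x.val < k + 2 then some ⟨min x.val k, (min_le_left _ _).trans_lt x.isLt⟩ else none

lemma dom_collapse (k : ℕ) : dom (collapse n k) = ({x | x.val < k} : Finset (Fin n)) := by
  ext x
  by_cases h : x.val < k <;> simp [mem_dom, collapse, h]

lemma dom_squash (k : ℕ) : dom (squash n k) = ({x | x.val < k + 2} : Finset (Fin n)) := by
  ext x
  by_cases h : x.val < k + 2 <;> simp [mem_dom, squash, h]

lemma ran_squash (k : ℕ) : ran (squash n k) = ({x | x.val < k + 1} : Finset (Fin n)) := by
  ext y
  simp only [mem_ran, squash, mem_filter, mem_univ, true_and]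
  constructor
  · rintro ⟨x, hx⟩
    split_ifs at hx
    cases Option.some_injective _ hx
    exact Nat.lt_succ_of_le (min_le_right _ _)
  · intro hy
    refine ⟨y, ?_⟩
    rw [if_pos (by omega)]
    exact congrArg some (Fin.ext (min_eq_left (by omega)))

lemma comp_collapse_squash (k : ℕ) :
    comp (collapse n (k + 1)) (squash n k) = collapse n (k + 2) := by
  funext x
  by_cases h : x.val < k + 2
  · simp [comp, collapse, squash, h, Nat.lt_succ_of_le (min_le_right _ _)]
  · simp [comp, collapse, squash, h]

lemma e_collapse_eq_mul (k : ℕ) :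
    e (collapse n (k + 2)) = e (collapse n (k + 1)) * e (squash n k) := by
  rw [e_mul_e (by rw [dom_collapse, ran_squash]), comp_collapse_squash]

lemma e_squash_mem_defectGE_one {k : ℕ} (hk : k + 2 ≤ n) : e (squash n k) ∈ defectGE n 1 := by
  rw [e_mem_defectGE_iff, dom_squash, ran_squash, Fin.card_filter_val_lt,
    Fin.card_filter_val_lt]
  omega

lemma e_collapse_mem_defectGE_one_pow {k : ℕ} (hk : k + 2 ≤ n) :
    e (collapse n (k + 2)) ∈ defectGE n 1 ^ (k + 1) := by
  induction k with
  | zero =>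
    rw [e_collapse_eq_mul, zero_add, pow_one]
    exact mul_mem_defectGE_left _ (e_squash_mem_defectGE_one hk)
  | succ k ih =>
    rw [e_collapse_eq_mul, pow_succ]
    exact Submodule.mul_mem_mul (ih (by omega)) (e_squash_mem_defectGE_one hk)

lemma defectGE_one_pow_eq_bot (hn : 1 ≤ n) : defectGE n 1 ^ n = ⊥ :=
  eq_bot_iff.mpr <| (defectGE_one_pow_le n).trans (defectGE_eq_bot hn le_rfl).le

lemma defectGE_one_pow_pred_ne_bot (hn : 1 ≤ n) : defectGE n 1 ^ (n - 1) ≠ ⊥ := by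
  rw [Submodule.ne_bot_iff]
  obtain rfl | hn := hn.eq_or_lt
  · exact ⟨1, by simp [Submodule.one_le.mp le_rfl], one_ne_zero⟩
  · obtain ⟨k, rfl⟩ : ∃ k, n = k + 2 := ⟨n - 2, by omega⟩
    exact ⟨_, e_collapse_mem_defectGE_one_pow le_rfl, e_ne_zero _⟩

end PTAlg

open PT PTAlg in
/-- For `n ≥ 1`, the Loewy length of the convolution algebra `A_n` is `n`:
the `n`-th power of the Jacobson radical of `A_n` is zero while the `(n−1)`-st power is
nonzero. -/
theorem loewy_length_of_convolution_algebra (n : ℕ) (hn : 1 ≤ n) :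
    (Submodule.restrictScalars ℂ (Ideal.jacobson (⊥ : Ideal (PTAlg n)))) ^ n = ⊥ ∧
    (Submodule.restrictScalars ℂ (Ideal.jacobson (⊥ : Ideal (PTAlg n)))) ^ (n - 1) ≠ ⊥ := by
  rw [restrictScalars_jacobson_eq_defectGE_one]
  exact ⟨defectGE_one_pow_eq_bot hn, defectGE_one_pow_pred_ne_bot hn⟩
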